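/- arXiv:1910.08546 — 2 statements merged into one kernel-verified Lean document; each statement's English description precedes it below -/
import Mathlib

section
/- Every k-automatic sequence (k ≥ 2) over a finite alphabet A is non-uniformly morphic; i.e., it is the image under a coding of the iterative fixed point of a non-uniform morphism. -/
/-!
Let `u` be the fixed point of a `k`-uniform morphism, so that `u (k * n + r)` (`r < k`) depends
only on `u n`; in particular the factor of `u` on `[k * n, k * n + 2 * k)` depends only on
`(u n, u (n + 1))`. Recode `u` over the letters `(u n, u (n + 1), n mod 2)` and cut the recoded
sequence into consecutive blocks starting at `k * n + n % 2`, of alternating lengths `k + 1` and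
`k - 1`. Each block then depends only on the letter at position `n`, so sending that letter to its
block is a well-defined morphism; it is non-uniform, and the recoded sequence is its fixed point.
-/

/-- Extension of a substitution `φ : A → B*` to finite words. -/
def wordMap {A B : Type} (φ : A → List B) (w : List A) : List B := w.flatMap φ

/-- `n`-fold iteration of a morphism applied to a word. -/
def iterWord {A : Type} (φ : A → List A) (n : ℕ) (w : List A) : List A :=
  (wordMap φ)^[n] w

/-- A morphism is `k`-uniform if every letter has image of length `k`. -/
def Uniform {A : Type} (k : ℕ) (φ : A → List A) : Prop := ∀ a, (φ a).length = k

/-- The finite word `w` is a prefix of the infinite sequence `s`. -/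
def PrefixSeq {A : Type} (w : List A) (s : ℕ → A) : Prop :=
  ∀ i, i < w.length → w[i]? = some (s i)

/-- `φ` is prolongable on `a₀`: `φ(a₀) = a₀ x` with `x` nonempty and iterates of `x` never empty. -/
def Prolongable {A : Type} (φ : A → List A) (a₀ : A) : Prop :=
  ∃ x : List A, x ≠ [] ∧ φ a₀ = a₀ :: x ∧ ∀ ℓ, iterWord φ ℓ x ≠ []

/-- `s` is the iterative fixed point of `φ` beginning with `a₀`:
`φ` is prolongable on `a₀` and every iterate `φ^n(a₀)` is a prefix of `s`
(their lengths tend to infinity thanks to prolongability, so `s` is determined). -/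
def IsIterFix {A : Type} (φ : A → List A) (a₀ : A) (s : ℕ → A) : Prop :=
  Prolongable φ a₀ ∧ ∀ n, PrefixSeq (iterWord φ n [a₀]) s

/-- `s` is ultimately periodic. -/
def UltimatelyPeriodic {A : Type} (s : ℕ → A) : Prop :=
  ∃ N p : ℕ, 1 ≤ p ∧ ∀ n, N ≤ n → s (n + p) = s n

/-- The extension of `φ` to infinite sequences fixes `s`: for every `m`,
the image of the length-`m` prefix of `s` is again a prefix of `s`. -/
def SeqFixedPoint {A : Type} (φ : A → List A) (s : ℕ → A) : Prop :=
  ∀ m, PrefixSeq (wordMap φ ((List.range m).map s)) s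

section Words

variable {A : Type} (φ : A → List A)

lemma wordMap_append (v w : List A) : wordMap φ (v ++ w) = wordMap φ v ++ wordMap φ w :=
  List.flatMap_append

lemma wordMap_singleton (a : A) : wordMap φ [a] = φ a :=
  List.flatMap_singleton _ _

lemma length_wordMap_of_uniform {k : ℕ} (hφ : Uniform k φ) (w : List A) :
    (wordMap φ w).length = k * w.length := by
  induction w with
  | nil => rfl
  | cons a w ih =>
    rw [← List.singleton_append, wordMap_append, List.length_append, wordMap_singleton, hφ, ih,
      List.singleton_append, List.length_cons, mul_add_one, add_comm]

lemma iterWord_succ (n : ℕ) (w : List A) : iterWord φ (n + 1) w = wordMap φ (iterWord φ n w) :=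
  Function.iterate_succ_apply' _ _ _

lemma iterWord_append (n : ℕ) (v w : List A) :
    iterWord φ n (v ++ w) = iterWord φ n v ++ iterWord φ n w := by
  induction n with
  | zero => rfl
  | succ n ih => rw [iterWord_succ, iterWord_succ, iterWord_succ, ih, wordMap_append]

lemma iterWord_ne_nil (hφ : ∀ a, φ a ≠ []) {w : List A} (hw : w ≠ []) (n : ℕ) :
    iterWord φ n w ≠ [] := by
  induction n with
  | zero => exact hw
  | succ n ih =>
    obtain ⟨a, t, ht⟩ := List.exists_cons_of_ne_nil ih
    rw [iterWord_succ, ht, ← List.singleton_append, wordMap_append, wordMap_singleton]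
    exact fun h => hφ a (List.append_eq_nil_iff.mp h).1

end Words

section Prefixes

variable {A : Type} {s : ℕ → A}

lemma prefixSeq_map_range (s : ℕ → A) (m : ℕ) : PrefixSeq ((List.range m).map s) s := by
  intro i hi
  rw [List.length_map, List.length_range] at hi
  rw [List.getElem?_map, List.getElem?_range hi, Option.map_some]

lemma PrefixSeq.eq_map_range {w : List A} (h : PrefixSeq w s) :
    w = (List.range w.length).map s := by
  refine List.ext_getElem? fun i => ?_
  by_cases hi : i < w.length
  · rw [h i hi, List.getElem?_map, List.getElem?_range hi, Option.map_some]
  · rw [List.getElem?_eq_none (by omega), List.getElem?_eq_none (by simp; omega)]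

lemma PrefixSeq.of_append {w₁ w₂ : List A} (h : PrefixSeq (w₁ ++ w₂) s) : PrefixSeq w₁ s :=
  fun i hi => by
    rw [← List.getElem?_append_left hi]
    exact h i (by rw [List.length_append]; omega)

end Prefixes

section FixedPoints

variable {A : Type} {φ : A → List A} {a₀ : A} {s : ℕ → A}

lemma Prolongable.lt_length_iterWord (h : Prolongable φ a₀) (n : ℕ) :
    n < (iterWord φ n [a₀]).length := by
  obtain ⟨x, -, hx, hxne⟩ := h
  induction n with
  | zero => simp [iterWord]
  | succ n ih =>
    have hsplit : iterWord φ (n + 1) [a₀] = iterWord φ n [a₀] ++ iterWord φ n x := by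
      rw [iterWord, Function.iterate_succ_apply, ← iterWord, wordMap_singleton, hx,
        ← List.singleton_append, iterWord_append]
    rw [hsplit, List.length_append]
    have := List.length_pos_of_ne_nil (hxne n)
    omega

/-- Since `φ^n(a₀)` has length greater than `n`, the prefix of length `m` of `s` is a prefix of
`φ^m(a₀)`, so its image is a prefix of `φ^(m+1)(a₀)`. -/
theorem IsIterFix.seqFixedPoint (h : IsIterFix φ a₀ s) : SeqFixedPoint φ s := by
  intro m
  obtain ⟨d, hd⟩ := Nat.exists_eq_add_of_le (h.1.lt_length_iterWord m).le
  have hpre := h.2 (m + 1)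
  rw [iterWord_succ, (h.2 m).eq_map_range, hd, List.range_add, List.map_append,
    wordMap_append] at hpre
  exact hpre.of_append

lemma SeqFixedPoint.getElem?_of_uniform {k : ℕ} (hφ : Uniform k φ) (h : SeqFixedPoint φ s)
    {q r : ℕ} (hr : r < k) : (φ (s q))[r]? = some (s (k * q + r)) := by
  have hpre := h (q + 1)
  rw [List.range_succ, List.map_append, wordMap_append, List.map_singleton,
    wordMap_singleton] at hpre
  have hlen : (wordMap φ ((List.range q).map s)).length = k * q := by
    rw [length_wordMap_of_uniform φ hφ, List.length_map, List.length_range]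
  have := hpre (k * q + r) (by rw [List.length_append, hlen, hφ]; omega)
  rwa [List.getElem?_append_right (by omega), hlen, Nat.add_sub_cancel_left] at this

end FixedPoints

section BlockMorphism

variable {C : Type} (v : ℕ → C) (p : ℕ → ℕ)

def block (n : ℕ) : List (Set.range v) :=
  (List.range (p (n + 1) - p n)).map fun j => Set.rangeFactorization v (p n + j)

/-- The letter `b = v n` is sent to `block v p n` for a chosen `n`; this is a morphism only when the block
depends on `v n` alone, which is the hypothesis `hv` below. -/
noncomputable def blockMorphism (b : Set.range v) : List (Set.range v) :=
  block v p b.2.choose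

variable {v p} (hv : ∀ n n', v n = v n' → block v p n = block v p n')
include hv

lemma blockMorphism_rangeFactorization (n : ℕ) :
    blockMorphism v p (Set.rangeFactorization v n) = block v p n :=
  hv _ _ (Set.rangeFactorization v n).2.choose_spec

lemma wordMap_blockMorphism (hp : Monotone p) (hp0 : p 0 = 0) (m : ℕ) :
    wordMap (blockMorphism v p) ((List.range m).map (Set.rangeFactorization v)) =
      (List.range (p m)).map (Set.rangeFactorization v) := by
  induction m with
  | zero => rw [hp0]; rfl
  | succ m ih =>
    obtain ⟨d, hd⟩ := Nat.exists_eq_add_of_le (hp m.le_succ)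
    rw [List.range_succ, List.map_append, wordMap_append, ih, List.map_singleton,
      wordMap_singleton, blockMorphism_rangeFactorization hv, block, hd, List.range_add,
      List.map_append, List.map_map, Nat.add_sub_cancel_left]
    rfl

lemma iterWord_blockMorphism (hp : Monotone p) (hp0 : p 0 = 0) (n : ℕ) :
    iterWord (blockMorphism v p) n [Set.rangeFactorization v 0] =
      (List.range (p^[n] 1)).map (Set.rangeFactorization v) := by
  induction n with
  | zero => rfl
  | succ n ih =>
    rw [iterWord_succ, ih, wordMap_blockMorphism hv hp hp0, Function.iterate_succ_apply']

theorem isIterFix_blockMorphism (hp : StrictMono p) (hp0 : p 0 = 0) (hp1 : 2 ≤ p 1) :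
    IsIterFix (blockMorphism v p) (Set.rangeFactorization v 0) (Set.rangeFactorization v) := by
  have hne : ∀ b, blockMorphism v p b ≠ [] := fun b => by
    have := hp (Nat.lt_add_one b.2.choose)
    simp only [blockMorphism, block, ne_eq, List.map_eq_nil_iff, List.range_eq_nil]
    omega
  obtain ⟨d, hd⟩ : ∃ d, p 1 = d + 1 := ⟨p 1 - 1, by omega⟩
  refine ⟨⟨(List.range d).map fun j => Set.rangeFactorization v (j + 1), ?_, ?_,
    iterWord_ne_nil _ hne ?_⟩, fun n => ?_⟩
  · simp only [ne_eq, List.map_eq_nil_iff, List.range_eq_nil]; omega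
  · rw [blockMorphism_rangeFactorization hv, block, hp0, hd, Nat.sub_zero, List.range_succ_eq_map,
      List.map_cons, List.map_map]
    simp only [Function.comp_def, Nat.succ_eq_add_one, zero_add]
  · simp only [ne_eq, List.map_eq_nil_iff, List.range_eq_nil]; omega
  · rw [iterWord_blockMorphism hv hp.monotone hp0]
    exact prefixSeq_map_range _ _

lemma not_uniform_blockMorphism {n n' : ℕ} (h : p (n + 1) - p n ≠ p (n' + 1) - p n') :
    ¬ ∃ m, Uniform m (blockMorphism v p) := by
  rintro ⟨m, hm⟩
  have hn := hm (Set.rangeFactorization v n)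
  have hn' := hm (Set.rangeFactorization v n')
  rw [blockMorphism_rangeFactorization hv, block, List.length_map, List.length_range] at hn hn'
  omega

end BlockMorphism

section UniformRecoding

variable {B : Type} {k : ℕ} {u : ℕ → B}

def pairParity (u : ℕ → B) (n : ℕ) : B × B × ZMod 2 := (u n, u (n + 1), n)

def blockStart (k n : ℕ) : ℕ := k * n + n % 2

lemma blockStart_succ (hk : 1 ≤ k) (n : ℕ) :
    blockStart k (n + 1) = blockStart k n + if n % 2 = 0 then k + 1 else k - 1 := by
  have : k * (n + 1) = k * n + k := by ring
  unfold blockStart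
  split_ifs <;> omega

lemma strictMono_blockStart (hk : 2 ≤ k) : StrictMono (blockStart k) :=
  strictMono_nat_of_lt_succ fun n => by rw [blockStart_succ (by omega)]; split_ifs <;> omega

variable (hu : ∀ n n', u n = u n' → ∀ r < k, u (k * n + r) = u (k * n' + r))
include hu

lemma apply_mul_add_eq_of_pair_eq {n n' i : ℕ} (h0 : u n = u n') (h1 : u (n + 1) = u (n' + 1))
    (hi : i < 2 * k) : u (k * n + i) = u (k * n' + i) := by
  by_cases hik : i < k
  · exact hu n n' h0 i hik
  · have e : ∀ m, k * m + i = k * (m + 1) + (i - k) := fun m => by rw [mul_add]; omega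
    rw [e, e]
    exact hu _ _ h1 _ (by omega)

lemma block_pairParity_eq (hk : 2 ≤ k) {n n' : ℕ} (h : pairParity u n = pairParity u n') :
    block (pairParity u) (blockStart k) n = block (pairParity u) (blockStart k) n' := by
  simp only [pairParity, Prod.mk.injEq] at h
  obtain ⟨h0, h1, hpar⟩ := h
  have hmod : n % 2 = n' % 2 := (ZMod.natCast_eq_natCast_iff' n n' 2).mp hpar
  have hlen : ∀ m, blockStart k (m + 1) - blockStart k m = if m % 2 = 0 then k + 1 else k - 1 :=
    fun m => by rw [blockStart_succ (by omega)]; omega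
  unfold block
  rw [hlen, hlen, hmod]
  refine List.map_congr_left fun j hj => Subtype.ext ?_
  have hj : n % 2 + j + 1 < 2 * k := by
    rw [List.mem_range] at hj
    split_ifs at hj <;> omega
  have e : ∀ m, blockStart k m + j = k * m + (m % 2 + j) := fun m => by unfold blockStart; omega
  show pairParity u _ = pairParity u _
  simp only [pairParity, Prod.mk.injEq, e, ← hmod, add_assoc]
  refine ⟨apply_mul_add_eq_of_pair_eq hu h0 h1 (by omega),
    apply_mul_add_eq_of_pair_eq hu h0 h1 hj, ?_⟩
  push_cast [ZMod.natCast_mod]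
  rw [hpar]

end UniformRecoding

theorem stmt6_general {A : Type} (k : ℕ) (hk : 2 ≤ k) (a : ℕ → A)
    (h : ∃ (B : Type) (_ : Fintype B) (φ : B → List B) (b₀ : B) (s : ℕ → B) (c : B → A),
      Uniform k φ ∧ IsIterFix φ b₀ s ∧ ∀ n, a n = c (s n)) :
    ∃ (B : Type) (_ : Fintype B) (φ : B → List B) (b₀ : B) (s : ℕ → B) (c : B → A),
      (¬ ∃ m, Uniform m φ) ∧ IsIterFix φ b₀ s ∧ (∀ n, a n = c (s n)) ∧
      Function.Surjective s := by
  obtain ⟨B, _, φ, b₀, u, c, hunif, hfix, hcode⟩ := h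
  have hu : ∀ n n', u n = u n' → ∀ r < k, u (k * n + r) = u (k * n' + r) := by
    intro n n' hn r hr
    have h := hfix.seqFixedPoint.getElem?_of_uniform hunif (q := n) hr
    rwa [hn, hfix.seqFixedPoint.getElem?_of_uniform hunif hr, Option.some_inj, eq_comm] at h
  have hv : ∀ n n', pairParity u n = pairParity u n' →
      block (pairParity u) (blockStart k) n = block (pairParity u) (blockStart k) n' :=
    fun _ _ => block_pairParity_eq hu hk
  refine ⟨Set.range (pairParity u), Fintype.ofFinite _, blockMorphism _ (blockStart k), _, _,
    fun b => c b.1.1, not_uniform_blockMorphism hv (n := 0) (n' := 1) ?_,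
    isIterFix_blockMorphism hv (strictMono_blockStart hk) rfl ?_, hcode,
    Set.rangeFactorization_surjective⟩
  all_goals simp only [blockStart]; omega

theorem stmt6 {A : Type} [Fintype A] (k : ℕ) (hk : 2 ≤ k) (a : ℕ → A)
    (h : ∃ (B : Type) (_ : Fintype B) (φ : B → List B) (b₀ : B) (s : ℕ → B) (c : B → A),
      Uniform k φ ∧ IsIterFix φ b₀ s ∧ ∀ n, a n = c (s n)) :
    ∃ (B : Type) (_ : Fintype B) (φ : B → List B) (b₀ : B) (s : ℕ → B) (c : B → A),
      (¬ ∃ m, Uniform m φ) ∧ IsIterFix φ b₀ s ∧ (∀ n, a n = c (s n)) ∧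
      Function.Surjective s :=
  stmt6_general k hk a h
end

section
/- If a sequence (aₙ)_{n≥0} over alphabet A is morphic, and α is a new letter not in A, then the sequence α a₁ a₂ ⋯ (obtained by replacing a₀ with α) is also morphic; moreover if (aₙ) is k-automatic then so is α a₁ a₂ ⋯. -/
/-- A sequence is morphic. -/
def IsMorphic {A : Type} (a : ℕ → A) : Prop :=
  ∃ (B : Type) (_ : Fintype B) (φ : B → List B) (b₀ : B) (s : ℕ → B) (c : B → A),
    IsIterFix φ b₀ s ∧ ∀ n, a n = c (s n)

/-- A sequence is `k`-automatic. -/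
def IsKAutomatic {A : Type} (k : ℕ) (a : ℕ → A) : Prop :=
  ∃ (B : Type) (_ : Fintype B) (φ : B → List B) (b₀ : B) (s : ℕ → B) (c : B → A),
    Uniform k φ ∧ IsIterFix φ b₀ s ∧ ∀ n, a n = c (s n)

/-! The iterative fixed point `s` of `φ` starts with `b₀`. Adjoin a fresh letter `none`, let it
play the role of `b₀` at the head only (`none ↦ none x` when `φ b₀ = b₀ x`), and let every other
letter `some b` evolve as `b` does. The fixed point of this morphism is `s` with its first letter
replaced by `none`, and the coding `Option.map c` sends `none` to the new letter. Image lengths do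
not change, so `k`-uniformity is preserved. -/

section FreshHead

variable {B : Type}

@[simp]
def freshHead (φ : B → List B) (b₀ : B) : Option B → List (Option B)
  | none => none :: (φ b₀).tail.map some
  | some b => (φ b).map some

def freshHeadSeq (s : ℕ → B) (n : ℕ) : Option B := if n = 0 then none else some (s n)

@[simp]
lemma wordMap_cons {C : Type} (φ : B → List C) (b : B) (w : List B) :
    wordMap φ (b :: w) = φ b ++ wordMap φ w :=
  List.flatMap_cons

lemma wordMap_freshHead_map_some (φ : B → List B) (b₀ : B) (w : List B) :
    wordMap (freshHead φ b₀) (w.map some) = (wordMap φ w).map some := by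
  simp [wordMap, List.flatMap_map, List.map_flatMap]

lemma iterWord_freshHead_map_some (φ : B → List B) (b₀ : B) (n : ℕ) (w : List B) :
    iterWord (freshHead φ b₀) n (w.map some) = (iterWord φ n w).map some := by
  induction n with
  | zero => rfl
  | succ n ih =>
    simp only [iterWord, Function.iterate_succ_apply'] at ih ⊢
    rw [ih, wordMap_freshHead_map_some]

lemma exists_iterWord_eq_cons {φ : B → List B} {b₀ : B} {x : List B} (hx : φ b₀ = b₀ :: x)
    (n : ℕ) : ∃ t, iterWord φ n [b₀] = b₀ :: t := by
  induction n with
  | zero => exact ⟨[], rfl⟩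
  | succ n ih =>
    obtain ⟨t, ht⟩ := ih
    refine ⟨x ++ wordMap φ t, ?_⟩
    rw [iterWord, Function.iterate_succ_apply', ← iterWord, ht]
    simp [hx]

lemma iterWord_freshHead_none {φ : B → List B} {b₀ : B} {x : List B} (hx : φ b₀ = b₀ :: x)
    (n : ℕ) : iterWord (freshHead φ b₀) n [none] = none :: (iterWord φ n [b₀]).tail.map some := by
  induction n with
  | zero => rfl
  | succ n ih =>
    obtain ⟨t, ht⟩ := exists_iterWord_eq_cons hx n
    simp only [iterWord, Function.iterate_succ_apply'] at ih ht ⊢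
    rw [ih, ht]
    simp [hx, wordMap_freshHead_map_some]

lemma PrefixSeq.freshHead {w : List B} {s : ℕ → B} (h : PrefixSeq w s) (hw : w ≠ []) :
    PrefixSeq (none :: w.tail.map some) (freshHeadSeq s) := by
  obtain ⟨b, t, rfl⟩ := List.exists_cons_of_ne_nil hw
  rintro (_ | j) hj
  · simp [freshHeadSeq]
  · simpa [freshHeadSeq] using h (j + 1) (by simpa using hj)

lemma Prolongable.freshHead {φ : B → List B} {b₀ : B} (h : Prolongable φ b₀) :
    Prolongable (freshHead φ b₀) none := by
  obtain ⟨x, hx_ne, hx, hx_iter⟩ := h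
  refine ⟨x.map some, by simpa using hx_ne, by simp [hx], fun ℓ => ?_⟩
  simpa [iterWord_freshHead_map_some] using hx_iter ℓ

lemma IsIterFix.freshHead {φ : B → List B} {b₀ : B} {s : ℕ → B} (h : IsIterFix φ b₀ s) :
    IsIterFix (freshHead φ b₀) none (freshHeadSeq s) := by
  refine ⟨h.1.freshHead, fun n => ?_⟩
  obtain ⟨⟨x, -, hx, -⟩, hpre⟩ := h
  rw [iterWord_freshHead_none hx]
  obtain ⟨t, ht⟩ := exists_iterWord_eq_cons hx n
  exact (hpre n).freshHead (by simp [ht])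

lemma Uniform.freshHead {k : ℕ} {φ : B → List B} (h : Uniform k φ) {b₀ : B} (hb₀ : φ b₀ ≠ []) :
    Uniform k (freshHead φ b₀)
  | none => by
    obtain ⟨b, t, ht⟩ := List.exists_cons_of_ne_nil hb₀
    simpa [ht] using h b₀
  | some b => by simpa using h b

lemma eq_map_freshHeadSeq {A : Type} {a : ℕ → A} {a' : ℕ → Option A} {s : ℕ → B} {c : B → A}
    (hc : ∀ n, a n = c (s n)) (h0 : a' 0 = none) (hn : ∀ n, 1 ≤ n → a' n = some (a n)) (n : ℕ) :
    a' n = (freshHeadSeq s n).map c := by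
  rcases n with _ | n
  · simpa [freshHeadSeq] using h0
  · simp [freshHeadSeq, hn (n + 1) (Nat.le_add_left 1 n), hc]

end FreshHead

theorem stmt8_general {A : Type} (a : ℕ → A) (a' : ℕ → Option A)
    (h0 : a' 0 = none) (hn : ∀ n, 1 ≤ n → a' n = some (a n)) :
    (IsMorphic a → IsMorphic a') ∧ ∀ k, IsKAutomatic k a → IsKAutomatic k a' := by
  constructor
  · rintro ⟨B, _, φ, b₀, s, c, hfix, hc⟩
    exact ⟨Option B, inferInstance, freshHead φ b₀, none, freshHeadSeq s, Option.map c,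
      hfix.freshHead, eq_map_freshHeadSeq hc h0 hn⟩
  · rintro k ⟨B, _, φ, b₀, s, c, hunif, hfix, hc⟩
    obtain ⟨x, -, hx, -⟩ := hfix.1
    exact ⟨Option B, inferInstance, freshHead φ b₀, none, freshHeadSeq s, Option.map c,
      hunif.freshHead (by simp [hx]), hfix.freshHead, eq_map_freshHeadSeq hc h0 hn⟩

theorem stmt8 {A : Type} [Fintype A] (a : ℕ → A) (a' : ℕ → Option A)
    (h0 : a' 0 = none) (hn : ∀ n, 1 ≤ n → a' n = some (a n)) :
    (IsMorphic a → IsMorphic a') ∧ ∀ k, IsKAutomatic k a → IsKAutomatic k a' :=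
  stmt8_general a a' h0 hn
end
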